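/- Let K ≥ 2, η ≥ 0, G ≥ 0, M₃ ≥ 0, and let L : ℝ^d → ℝ be three times continuously differentiable on an open set U that is star-shaped with respect to θ₀, with the norm of the third derivative of L bounded by M₃ on U. Set g₀ = ∇L(θ₀), H₀ = ∇²L(θ₀), D = I − η·diag(H₀), and ρ = max(1, ‖I − η·H₀‖). Define the true gradient-descent trajectory θ_{n+1}^{true} = θ_n^{true} − η·∇L(θ_n^{true}) with θ_0^{true} = θ₀, and the quadratic-model trajectory θ_{n+1}^{quad} = θ_n^{quad} − η·(I − η·H₀)^n g₀ with θ_0^{quad} = θ₀, and suppose θ_n^{true} ∈ U and θ_n^{quad} ∈ U for all 0 ≤ n ≤ K. Define the diagonal-surrogate point θ_K^{diag} = θ₀ − η·∑_{n=0}^{K−1} D^n g₀. If sup_{0 ≤ n < K} ‖∇L(θ_n^{true})‖ ≤ G, then ‖θ_K^{diag} − θ_K^{true}‖ ≤ (K(K−1)/2)·η²·‖H₀^off‖·‖g₀‖·ρ^{K−2} + (K(K−1)(2K−1)/12)·η³·M₃·G²·ρ^{K−1}. -/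

import Mathlib

/-!
Split `θdiag - θtrue K = (θdiag - θquad K) + (θquad K - θtrue K)`.

The first term is `η • ∑ₙ (Aⁿ - Dⁿ) g₀` with `A = I - ηH₀` and `D` its diagonal part. Since
`‖D‖ ≤ ‖A‖ ≤ ρ`, telescoping gives `‖Aⁿ - Dⁿ‖ ≤ n ‖A - D‖ ρⁿ⁻¹ = n η ‖H₀^off‖ ρⁿ⁻¹`.

For the second term, `θquad` is gradient descent on the quadratic model
`θ ↦ g₀ + H₀ (θ - θ₀)`, so the error `eₙ = θquad n - θtrue n` obeys `eₙ₊₁ = A eₙ + η rₙ`, where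
`rₙ` is the second-order Taylor remainder of `∇L` at `θtrue n`. Since `‖θtrue n - θ₀‖ ≤ η n G`,
`‖rₙ‖ ≤ M₃ (η n G)² / 2`, and unrolling the recursion sums `n²`.
-/

/-- Operator (spectral) norm of a real matrix, induced by the Euclidean norm. -/
noncomputable def matOpNorm {d : ℕ} (A : Matrix (Fin d) (Fin d) ℝ) : ℝ :=
  ‖(Matrix.toEuclideanCLM (𝕜 := ℝ) (n := Fin d) A :
      EuclideanSpace ℝ (Fin d) →L[ℝ] EuclideanSpace ℝ (Fin d))‖

/-- A matrix acting on a Euclidean vector by matrix-vector multiplication. -/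
noncomputable def mulVecE {d : ℕ} (A : Matrix (Fin d) (Fin d) ℝ)
    (v : EuclideanSpace ℝ (Fin d)) : EuclideanSpace ℝ (Fin d) :=
  Matrix.toEuclideanCLM (𝕜 := ℝ) (n := Fin d) A v

open Finset
open scoped Matrix.Norms.L2Operator

theorem sum_range_natCast (K : ℕ) : ∑ n ∈ range K, (n : ℝ) = K * (K - 1) / 2 := by
  induction K with
  | zero => simp
  | succ K ih => rw [sum_range_succ, ih]; push_cast; ring

theorem sum_range_natCast_sq (K : ℕ) :
    ∑ n ∈ range K, (n : ℝ) ^ 2 = K * (K - 1) * (2 * K - 1) / 6 := by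
  induction K with
  | zero => simp
  | succ K ih => rw [sum_range_succ, ih]; push_cast; ring

theorem eq_sub_smul_sum_range_of_succ {M : Type*} [AddCommGroup M] [Module ℝ M]
    {x u : ℕ → M} {c : ℝ} (hx : ∀ n, x (n + 1) = x n - c • u n) (n : ℕ) :
    x n = x 0 - c • ∑ m ∈ range n, u m := by
  induction n with
  | zero => simp
  | succ n ih => rw [hx, ih, sum_range_succ, smul_add]; abel

theorem norm_sub_apply_zero_le_of_succ {E : Type*} [SeminormedAddCommGroup E] [NormedSpace ℝ E]
    {x u : ℕ → E} {c G : ℝ} {K : ℕ} (hx : ∀ n, x (n + 1) = x n - c • u n) (hc : 0 ≤ c)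
    (hu : ∀ n < K, ‖u n‖ ≤ G) {n : ℕ} (hn : n ≤ K) : ‖x n - x 0‖ ≤ c * n * G := by
  rw [eq_sub_smul_sum_range_of_succ hx n, sub_sub_cancel_left, norm_neg, norm_smul,
    Real.norm_of_nonneg hc, mul_assoc]
  gcongr
  calc ‖∑ m ∈ range n, u m‖ ≤ ∑ m ∈ range n, ‖u m‖ := norm_sum_le _ _
    _ ≤ ∑ _m ∈ range n, G := sum_le_sum fun m hm => hu m (by simp at hm; omega)
    _ = n * G := by simp

section SeminormedRing

variable {R : Type*} [SeminormedRing R] {a b : R} {ρ : ℝ}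

theorem norm_mul_pow_le (hb : ‖b‖ ≤ ρ) (x : R) (n : ℕ) : ‖x * b ^ n‖ ≤ ‖x‖ * ρ ^ n := by
  induction n with
  | zero => simp
  | succ n ih =>
    rw [pow_succ, ← mul_assoc, pow_succ, ← mul_assoc]
    exact (norm_mul_le _ _).trans
      (mul_le_mul ih hb (norm_nonneg _) (by positivity [(norm_nonneg b).trans hb]))

theorem norm_pow_sub_pow_le (ha : ‖a‖ ≤ ρ) (hb : ‖b‖ ≤ ρ) (n : ℕ) :
    ‖a ^ n - b ^ n‖ ≤ n * ‖a - b‖ * ρ ^ (n - 1) := by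
  have hρ : 0 ≤ ρ := (norm_nonneg a).trans ha
  induction n with
  | zero => simp
  | succ n ih =>
    have hsplit : a ^ (n + 1) - b ^ (n + 1) = a * (a ^ n - b ^ n) + (a - b) * b ^ n := by
      rw [mul_sub, sub_mul, ← pow_succ', ← pow_succ']; abel
    have hpow : (n : ℝ) * ρ ^ (n - 1) * ρ = n * ρ ^ n := by
      rcases n with _ | n <;> simp [pow_succ, mul_assoc]
    calc ‖a ^ (n + 1) - b ^ (n + 1)‖
        ≤ ‖a‖ * ‖a ^ n - b ^ n‖ + ‖(a - b) * b ^ n‖ := by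
          rw [hsplit]; exact (norm_add_le _ _).trans (by gcongr; exact norm_mul_le _ _)
      _ ≤ ρ * (n * ‖a - b‖ * ρ ^ (n - 1)) + ‖a - b‖ * ρ ^ n := by
          gcongr
          exact norm_mul_pow_le hb _ n
      _ = (n + 1 : ℕ) * ‖a - b‖ * ρ ^ (n + 1 - 1) := by
          rw [Nat.add_sub_cancel]; push_cast; linear_combination ‖a - b‖ * hpow

theorem norm_sum_range_pow_sub_pow_le (ha : ‖a‖ ≤ ρ) (hb : ‖b‖ ≤ ρ) (hρ : 1 ≤ ρ) (K : ℕ) :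
    ‖∑ n ∈ range K, (a ^ n - b ^ n)‖ ≤ K * (K - 1) / 2 * ‖a - b‖ * ρ ^ (K - 2) := by
  calc ‖∑ n ∈ range K, (a ^ n - b ^ n)‖ ≤ ∑ n ∈ range K, ‖a ^ n - b ^ n‖ := norm_sum_le _ _
    _ ≤ ∑ n ∈ range K, (n : ℝ) * (‖a - b‖ * ρ ^ (K - 2)) := by
        refine sum_le_sum fun n hn => (norm_pow_sub_pow_le ha hb n).trans ?_
        have hexp : n - 1 ≤ K - 2 := by simp at hn; omega
        rw [mul_assoc]
        gcongr
    _ = K * (K - 1) / 2 * ‖a - b‖ * ρ ^ (K - 2) := by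
        rw [← sum_mul, sum_range_natCast]; ring

end SeminormedRing

namespace Matrix

variable {n 𝕜 : Type*} [Fintype n] [DecidableEq n] [RCLike 𝕜]

theorem norm_entry_le_l2_opNorm (A : Matrix n n 𝕜) (i j : n) : ‖A i j‖ ≤ ‖A‖ := by
  calc ‖A i j‖ = ‖toEuclideanCLM (𝕜 := 𝕜) A (EuclideanSpace.single j 1) i‖ := by
        simp [mulVec, dotProduct]
    _ ≤ ‖toEuclideanCLM (𝕜 := 𝕜) A (EuclideanSpace.single j 1)‖ := PiLp.norm_apply_le _ i
    _ ≤ ‖A‖ * ‖(EuclideanSpace.single j 1 : EuclideanSpace 𝕜 n)‖ :=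
        ContinuousLinearMap.le_opNorm _ _
    _ = ‖A‖ := by simp

theorem l2_opNorm_diagonal_diag_le (A : Matrix n n 𝕜) : ‖diagonal A.diag‖ ≤ ‖A‖ := by
  rw [l2_opNorm_diagonal]
  exact (pi_norm_le_iff_of_nonneg (norm_nonneg A)).2 fun i => norm_entry_le_l2_opNorm A i i

end Matrix

theorem norm_sub_sub_fderiv_le_of_norm_iteratedFDeriv_two_le
    {E F : Type*} [NormedAddCommGroup E] [NormedSpace ℝ E]
    [NormedAddCommGroup F] [NormedSpace ℝ F]
    {f : E → F} {s : Set E} {a x : E} {M : ℝ} (hs : IsOpen s) (hstar : StarConvex ℝ a s)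
    (hf : ContDiffOn ℝ 2 f s) (hbound : ∀ z ∈ s, ‖iteratedFDeriv ℝ 2 f z‖ ≤ M) (hx : x ∈ s) :
    ‖f x - f a - fderiv ℝ f a (x - a)‖ ≤ M / 2 * ‖x - a‖ ^ 2 := by
  set v := x - a
  have hseg : ∀ t ∈ Set.Icc (0 : ℝ) 1, a + t • v ∈ s := fun t ht =>
    hstar.add_smul_sub_mem hx ht.1 ht.2
  have hf_diff : ∀ z ∈ s, DifferentiableAt ℝ f z := fun z hz =>
    (hf.contDiffAt (hs.mem_nhds hz)).differentiableAt two_ne_zero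
  have hf'_diff : ∀ z ∈ s, DifferentiableAt ℝ (fderiv ℝ f) z := fun z hz =>
    ((hf.fderiv_of_isOpen hs (m := 1) (by norm_num)).contDiffAt
      (hs.mem_nhds hz)).differentiableAt one_ne_zero
  have hf'_lip : ∀ t ∈ Set.Icc (0 : ℝ) 1,
      ‖fderiv ℝ f (a + t • v) - fderiv ℝ f a‖ ≤ M * (t * ‖v‖) := by
    intro t ht
    have hsub : segment ℝ a x ⊆ s := hstar.segment_subset hx
    have hmem : a + t • v ∈ segment ℝ a x := by rw [segment_eq_image']; exact ⟨t, ht, rfl⟩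
    have := (convex_segment a x).norm_image_sub_le_of_norm_fderiv_le
      (fun z hz => hf'_diff z (hsub hz))
      (fun z hz => by
        rw [← norm_iteratedFDeriv_one, norm_iteratedFDeriv_fderiv]; exact hbound z (hsub hz))
      (left_mem_segment ℝ a x) hmem
    simpa [norm_smul, abs_of_nonneg ht.1] using this
  -- Fencing `φ` by `M ‖v‖² t² / 2`, instead of integrating `φ'`, gives the factor `1 / 2`.
  set φ : ℝ → F := fun t => f (a + t • v) - f a - t • fderiv ℝ f a v
  have hφ : ∀ t ∈ Set.Icc (0 : ℝ) 1,
      HasDerivAt φ (fderiv ℝ f (a + t • v) v - fderiv ℝ f a v) t := by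
    intro t ht
    have hpath : HasDerivAt (fun s : ℝ => a + s • v) v t := by
      simpa using ((hasDerivAt_id t).smul_const v).const_add a
    exact (((hf_diff _ (hseg t ht)).hasFDerivAt.comp_hasDerivAt t hpath).sub_const _).sub
      (by simpa using (hasDerivAt_id t).smul_const (fderiv ℝ f a v))
  have hB : ∀ t : ℝ, HasDerivAt (fun t => M / 2 * ‖v‖ ^ 2 * t ^ 2) (M * ‖v‖ ^ 2 * t) t := by
    intro t
    refine ((hasDerivAt_pow 2 t).const_mul (M / 2 * ‖v‖ ^ 2)).congr_deriv ?_
    ring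
  have hφ_le := image_norm_le_of_norm_deriv_right_le_deriv_boundary (a := 0) (b := 1) (f := φ)
    (B := fun t => M / 2 * ‖v‖ ^ 2 * t ^ 2) (B' := fun t => M * ‖v‖ ^ 2 * t)
    (fun t ht => (hφ t ht).continuousAt.continuousWithinAt)
    (fun t ht => (hφ t (Set.Ico_subset_Icc_self ht)).hasDerivWithinAt)
    (by simp [φ])
    hB
    (fun t ht => by
      have ht' := Set.Ico_subset_Icc_self ht
      calc ‖fderiv ℝ f (a + t • v) v - fderiv ℝ f a v‖
          = ‖(fderiv ℝ f (a + t • v) - fderiv ℝ f a) v‖ := rfl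
        _ ≤ ‖fderiv ℝ f (a + t • v) - fderiv ℝ f a‖ * ‖v‖ := ContinuousLinearMap.le_opNorm _ _
        _ ≤ M * (t * ‖v‖) * ‖v‖ := by gcongr; exact hf'_lip t ht'
        _ = M * ‖v‖ ^ 2 * t := by ring)
    (Set.right_mem_Icc.2 zero_le_one)
  simpa [φ, v] using hφ_le

open InnerProductSpace in
theorem norm_gradient_sub_sub_fderiv_le_of_norm_iteratedFDeriv_three_le
    {E : Type*} [NormedAddCommGroup E] [InnerProductSpace ℝ E] [CompleteSpace E]
    {L : E → ℝ} {s : Set E} {a x : E} {M : ℝ} (hs : IsOpen s) (hstar : StarConvex ℝ a s)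
    (hL : ContDiffOn ℝ 3 L s) (hbound : ∀ z ∈ s, ‖iteratedFDeriv ℝ 3 L z‖ ≤ M) (hx : x ∈ s) :
    ‖gradient L x - gradient L a - fderiv ℝ (gradient L) a (x - a)‖ ≤ M / 2 * ‖x - a‖ ^ 2 := by
  let ι : StrongDual ℝ E ≃ₗᵢ[ℝ] E := (toDual ℝ E).symm
  have hgrad : gradient L = ι ∘ fderiv ℝ L := rfl
  rw [hgrad, ι.comp_fderiv]
  change ‖ι (fderiv ℝ L x) - ι (fderiv ℝ L a) - ι (fderiv ℝ (fderiv ℝ L) a (x - a))‖ ≤ _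
  rw [← map_sub, ← map_sub, ι.norm_map]
  exact norm_sub_sub_fderiv_le_of_norm_iteratedFDeriv_two_le hs hstar
    (hL.fderiv_of_isOpen hs (by norm_num))
    (fun z hz => norm_iteratedFDeriv_fderiv.trans_le (hbound z hz)) hx

theorem norm_le_pow_mul_sum_of_succ {E : Type*} [SeminormedAddCommGroup E] [NormedSpace ℝ E]
    {e r : ℕ → E} {B : E →L[ℝ] E} {ρ : ℝ} (he0 : e 0 = 0) (he : ∀ n, e (n + 1) = B (e n) + r n)
    (hB : ‖B‖ ≤ ρ) (hρ : 1 ≤ ρ) (K : ℕ) :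
    ‖e K‖ ≤ ρ ^ (K - 1) * ∑ n ∈ range K, ‖r n‖ := by
  induction K with
  | zero => simp [he0]
  | succ K ih =>
    have hpow : ρ * (ρ ^ (K - 1) * ∑ n ∈ range K, ‖r n‖) ≤ ρ ^ K * ∑ n ∈ range K, ‖r n‖ := by
      rcases K with _ | K
      · simp
      · exact le_of_eq (by rw [Nat.add_sub_cancel, ← mul_assoc, ← pow_succ'])
    calc ‖e (K + 1)‖ ≤ ‖B‖ * ‖e K‖ + ‖r K‖ := by
          rw [he]; exact (norm_add_le _ _).trans (by gcongr; exact B.le_opNorm _)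
      _ ≤ ρ * (ρ ^ (K - 1) * ∑ n ∈ range K, ‖r n‖) + 1 * ‖r K‖ := by
          rw [one_mul]; gcongr
      _ ≤ ρ ^ K * ∑ n ∈ range K, ‖r n‖ + ρ ^ K * ‖r K‖ := by
          gcongr; exact one_le_pow₀ hρ
      _ = ρ ^ (K + 1 - 1) * ∑ n ∈ range (K + 1), ‖r n‖ := by
          rw [Nat.add_sub_cancel, sum_range_succ, mul_add]

theorem matOpNorm_eq_norm {d : ℕ} (A : Matrix (Fin d) (Fin d) ℝ) : matOpNorm A = ‖A‖ := rfl

theorem norm_mulVecE_le {d : ℕ} (A : Matrix (Fin d) (Fin d) ℝ) (v : EuclideanSpace ℝ (Fin d)) :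
    ‖mulVecE A v‖ ≤ ‖A‖ * ‖v‖ :=
  (Matrix.toEuclideanCLM (𝕜 := ℝ) A).le_opNorm v

theorem norm_smul_sum_mulVecE_pow_sub_diagonal_le {d : ℕ} (H : Matrix (Fin d) (Fin d) ℝ)
    {η ρ : ℝ} (hη : 0 ≤ η) (hρA : ‖1 - η • H‖ ≤ ρ) (hρ : 1 ≤ ρ)
    (v : EuclideanSpace ℝ (Fin d)) (K : ℕ) :
    ‖η • ∑ n ∈ range K, (mulVecE ((1 - η • H) ^ n) v
        - mulVecE ((1 - η • Matrix.diagonal H.diag) ^ n) v)‖ ≤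
      K * (K - 1) / 2 * η ^ 2 * ‖H - Matrix.diagonal H.diag‖ * ‖v‖ * ρ ^ (K - 2) := by
  have hdiag : 1 - η • Matrix.diagonal H.diag = Matrix.diagonal (1 - η • H).diag := by
    ext i j
    by_cases h : i = j <;> simp [h]
  have hρD : ‖1 - η • Matrix.diagonal H.diag‖ ≤ ρ :=
    hdiag ▸ (Matrix.l2_opNorm_diagonal_diag_le _).trans hρA
  have hAD : ‖(1 - η • H) - (1 - η • Matrix.diagonal H.diag)‖ =
      η * ‖H - Matrix.diagonal H.diag‖ := by
    rw [sub_sub_sub_cancel_left, ← smul_sub, norm_smul, Real.norm_of_nonneg hη, norm_sub_rev]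
  have hsum : ∑ n ∈ range K, (mulVecE ((1 - η • H) ^ n) v
        - mulVecE ((1 - η • Matrix.diagonal H.diag) ^ n) v) =
      mulVecE (∑ n ∈ range K, ((1 - η • H) ^ n - (1 - η • Matrix.diagonal H.diag) ^ n)) v := by
    simp [mulVecE]
  rw [hsum, norm_smul, Real.norm_of_nonneg hη]
  calc η * ‖mulVecE _ v‖
      ≤ η * (‖∑ n ∈ range K, ((1 - η • H) ^ n - (1 - η • Matrix.diagonal H.diag) ^ n)‖ * ‖v‖) := by
        gcongr; exact norm_mulVecE_le _ _
    _ ≤ η * (K * (K - 1) / 2 * ‖(1 - η • H) - (1 - η • Matrix.diagonal H.diag)‖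
          * ρ ^ (K - 2) * ‖v‖) := by
        gcongr; exact norm_sum_range_pow_sub_pow_le hρA hρD hρ K
    _ = K * (K - 1) / 2 * η ^ 2 * ‖H - Matrix.diagonal H.diag‖ * ‖v‖ * ρ ^ (K - 2) := by
        rw [hAD]; ring

theorem mulVecE_pow_eq_add_of_succ {d : ℕ} (H : Matrix (Fin d) (Fin d) ℝ) (η : ℝ)
    (g : EuclideanSpace ℝ (Fin d)) {x : ℕ → EuclideanSpace ℝ (Fin d)}
    (hx : ∀ n, x (n + 1) = x n - η • mulVecE ((1 - η • H) ^ n) g) (n : ℕ) :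
    mulVecE ((1 - η • H) ^ n) g = g + mulVecE H (x n - x 0) := by
  have hgeom : (1 - η • H) ^ n = 1 - η • H * ∑ m ∈ range n, (1 - η • H) ^ m := by
    have h := mul_geom_sum (1 - η • H) n
    rw [sub_sub_cancel_left, neg_mul, neg_eq_iff_eq_neg, neg_sub] at h
    rw [h, sub_sub_cancel]
  rw [eq_sub_smul_sum_range_of_succ hx n, sub_sub_cancel_left, hgeom]
  simp [mulVecE, sub_eq_add_neg]

theorem norm_quadModel_sub_gradientDescent_le {d K : ℕ} {η G M₃ ρ : ℝ} (hη : 0 ≤ η)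
    (hM₃ : 0 ≤ M₃) {L : EuclideanSpace ℝ (Fin d) → ℝ} {U : Set (EuclideanSpace ℝ (Fin d))}
    (hU : IsOpen U) {θ₀ : EuclideanSpace ℝ (Fin d)} (hstar : StarConvex ℝ θ₀ U)
    (hL : ContDiffOn ℝ 3 L U) (hbound : ∀ x ∈ U, ‖iteratedFDeriv ℝ 3 L x‖ ≤ M₃)
    {H₀ : Matrix (Fin d) (Fin d) ℝ} (hH₀ : ∀ v, mulVecE H₀ v = fderiv ℝ (gradient L) θ₀ v)
    (hρA : ‖1 - η • H₀‖ ≤ ρ) (hρ : 1 ≤ ρ) {θtrue θquad : ℕ → EuclideanSpace ℝ (Fin d)}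
    (htrue0 : θtrue 0 = θ₀) (hquad0 : θquad 0 = θ₀)
    (htrue : ∀ n, θtrue (n + 1) = θtrue n - η • gradient L (θtrue n))
    (hquad : ∀ n, θquad (n + 1) = θquad n - η • mulVecE ((1 - η • H₀) ^ n) (gradient L θ₀))
    (hmemT : ∀ n < K, θtrue n ∈ U) (hGbd : ∀ n < K, ‖gradient L (θtrue n)‖ ≤ G) :
    ‖θquad K - θtrue K‖ ≤ K * (K - 1) * (2 * K - 1) / 12 * η ^ 3 * M₃ * G ^ 2 * ρ ^ (K - 1) := by
  set g₀ := gradient L θ₀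
  set r : ℕ → EuclideanSpace ℝ (Fin d) :=
    fun n => η • (gradient L (θtrue n) - g₀ - mulVecE H₀ (θtrue n - θ₀))
  have hrec : ∀ n, θquad (n + 1) - θtrue (n + 1) =
      Matrix.toEuclideanCLM (𝕜 := ℝ) (1 - η • H₀) (θquad n - θtrue n) + r n := by
    intro n
    rw [hquad, htrue, mulVecE_pow_eq_add_of_succ H₀ η g₀ hquad n, hquad0]
    simp only [r, mulVecE, map_sub, map_one, map_smul, sub_apply, one_apply_eq_self, smul_apply]
    module
  have hr : ∀ n < K, ‖r n‖ ≤ η ^ 3 * M₃ * G ^ 2 / 2 * n ^ 2 := by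
    intro n hn
    have hdist : ‖θtrue n - θ₀‖ ≤ η * n * G :=
      htrue0 ▸ norm_sub_apply_zero_le_of_succ htrue hη hGbd hn.le
    have htaylor := norm_gradient_sub_sub_fderiv_le_of_norm_iteratedFDeriv_three_le hU hstar hL
      hbound (hmemT n hn)
    rw [← hH₀] at htaylor
    calc ‖r n‖ ≤ η * (M₃ / 2 * ‖θtrue n - θ₀‖ ^ 2) := by
          rw [norm_smul, Real.norm_of_nonneg hη]; gcongr
      _ ≤ η * (M₃ / 2 * (η * n * G) ^ 2) := by gcongr
      _ = η ^ 3 * M₃ * G ^ 2 / 2 * n ^ 2 := by ring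
  calc ‖θquad K - θtrue K‖ ≤ ρ ^ (K - 1) * ∑ n ∈ range K, ‖r n‖ :=
        norm_le_pow_mul_sum_of_succ (e := fun n => θquad n - θtrue n)
          (by rw [hquad0, htrue0, sub_self]) hrec hρA hρ K
    _ ≤ ρ ^ (K - 1) * ∑ n ∈ range K, η ^ 3 * M₃ * G ^ 2 / 2 * (n : ℝ) ^ 2 := by
        gcongr with n hn; exact hr n (mem_range.mp hn)
    _ = K * (K - 1) * (2 * K - 1) / 12 * η ^ 3 * M₃ * G ^ 2 * ρ ^ (K - 1) := by
        rw [← mul_sum, sum_range_natCast_sq]; ring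

theorem stmt9_general {d : ℕ} (K : ℕ) (η G M₃ : ℝ)
    (hη : 0 ≤ η) (hM₃ : 0 ≤ M₃)
    (L : EuclideanSpace ℝ (Fin d) → ℝ)
    (U : Set (EuclideanSpace ℝ (Fin d))) (hU : IsOpen U)
    (θ₀ : EuclideanSpace ℝ (Fin d)) (hstar : StarConvex ℝ θ₀ U)
    (hL : ContDiffOn ℝ 3 L U)
    (hbound : ∀ x ∈ U, ‖iteratedFDeriv ℝ 3 L x‖ ≤ M₃)
    (g₀ : EuclideanSpace ℝ (Fin d)) (hg₀ : g₀ = gradient L θ₀)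
    (H₀ : Matrix (Fin d) (Fin d) ℝ)
    (hH₀ : ∀ v, mulVecE H₀ v = fderiv ℝ (gradient L) θ₀ v)
    (ρ : ℝ) (hρ : ρ = max 1 (matOpNorm (1 - η • H₀)))
    (θtrue θquad : ℕ → EuclideanSpace ℝ (Fin d))
    (htrue0 : θtrue 0 = θ₀) (hquad0 : θquad 0 = θ₀)
    (htrue : ∀ n, θtrue (n + 1) = θtrue n - η • gradient L (θtrue n))
    (hquad : ∀ n, θquad (n + 1) = θquad n - η • mulVecE ((1 - η • H₀) ^ n) g₀)
    (hmemT : ∀ n ≤ K, θtrue n ∈ U)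
    (hGbd : ∀ n < K, ‖gradient L (θtrue n)‖ ≤ G)
    (θdiag : EuclideanSpace ℝ (Fin d))
    (hdiag : θdiag = θ₀ - η • ∑ n ∈ Finset.range K,
        mulVecE ((1 - η • Matrix.diagonal (fun i => H₀ i i)) ^ n) g₀) :
    ‖θdiag - θtrue K‖ ≤
      (K : ℝ) * ((K : ℝ) - 1) / 2 * η ^ 2 *
          matOpNorm (H₀ - Matrix.diagonal (fun i => H₀ i i)) * ‖g₀‖ * ρ ^ (K - 2)
        + (K : ℝ) * ((K : ℝ) - 1) * (2 * (K : ℝ) - 1) / 12 *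
          η ^ 3 * M₃ * G ^ 2 * ρ ^ (K - 1) := by
  subst hg₀
  rw [matOpNorm_eq_norm] at hρ ⊢
  have hρ1 : 1 ≤ ρ := hρ ▸ le_max_left _ _
  have hρA : ‖1 - η • H₀‖ ≤ ρ := hρ ▸ le_max_right _ _
  have hdiagQuad : θdiag - θquad K = η • ∑ n ∈ range K,
      (mulVecE ((1 - η • H₀) ^ n) (gradient L θ₀)
        - mulVecE ((1 - η • Matrix.diagonal (fun i => H₀ i i)) ^ n) (gradient L θ₀)) := by
    rw [hdiag, eq_sub_smul_sum_range_of_succ hquad K, hquad0, sum_sub_distrib, smul_sub]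
    abel
  calc ‖θdiag - θtrue K‖ ≤ ‖θdiag - θquad K‖ + ‖θquad K - θtrue K‖ :=
        norm_sub_le_norm_sub_add_norm_sub _ _ _
    _ ≤ _ := add_le_add
        (hdiagQuad ▸ norm_smul_sum_mulVecE_pow_sub_diagonal_le H₀ hη hρA hρ1 _ K)
        (norm_quadModel_sub_gradientDescent_le hη hM₃ hU hstar hL hbound hH₀ hρA hρ1 htrue0
          hquad0 htrue hquad (fun n hn => hmemT n hn.le) hGbd)

/-- displacement-error bound for the diagonal surrogate. -/
theorem stmt9 {d : ℕ} (K : ℕ) (hK : 2 ≤ K) (η G M₃ : ℝ)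
    (hη : 0 ≤ η) (hG : 0 ≤ G) (hM₃ : 0 ≤ M₃)
    (L : EuclideanSpace ℝ (Fin d) → ℝ)
    (U : Set (EuclideanSpace ℝ (Fin d))) (hU : IsOpen U)
    (θ₀ : EuclideanSpace ℝ (Fin d)) (hstar : StarConvex ℝ θ₀ U)
    (hL : ContDiffOn ℝ 3 L U)
    (hbound : ∀ x ∈ U, ‖iteratedFDeriv ℝ 3 L x‖ ≤ M₃)
    (g₀ : EuclideanSpace ℝ (Fin d)) (hg₀ : g₀ = gradient L θ₀)
    (H₀ : Matrix (Fin d) (Fin d) ℝ)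
    (hH₀ : ∀ v, mulVecE H₀ v = fderiv ℝ (gradient L) θ₀ v)
    (ρ : ℝ) (hρ : ρ = max 1 (matOpNorm (1 - η • H₀)))
    (θtrue θquad : ℕ → EuclideanSpace ℝ (Fin d))
    (htrue0 : θtrue 0 = θ₀) (hquad0 : θquad 0 = θ₀)
    (htrue : ∀ n, θtrue (n + 1) = θtrue n - η • gradient L (θtrue n))
    (hquad : ∀ n, θquad (n + 1) = θquad n - η • mulVecE ((1 - η • H₀) ^ n) g₀)
    (hmemT : ∀ n ≤ K, θtrue n ∈ U) (hmemQ : ∀ n ≤ K, θquad n ∈ U)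
    (hGbd : ∀ n < K, ‖gradient L (θtrue n)‖ ≤ G)
    (θdiag : EuclideanSpace ℝ (Fin d))
    (hdiag : θdiag = θ₀ - η • ∑ n ∈ Finset.range K,
        mulVecE ((1 - η • Matrix.diagonal (fun i => H₀ i i)) ^ n) g₀) :
    ‖θdiag - θtrue K‖ ≤
      (K : ℝ) * ((K : ℝ) - 1) / 2 * η ^ 2 *
          matOpNorm (H₀ - Matrix.diagonal (fun i => H₀ i i)) * ‖g₀‖ * ρ ^ (K - 2)
        + (K : ℝ) * ((K : ℝ) - 1) * (2 * (K : ℝ) - 1) / 12 *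
          η ^ 3 * M₃ * G ^ 2 * ρ ^ (K - 1) :=
  stmt9_general K η G M₃ hη hM₃ L U hU θ₀ hstar hL hbound g₀ hg₀ H₀ hH₀ ρ hρ θtrue θquad htrue0
    hquad0 htrue hquad hmemT hGbd θdiag hdiag
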